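/- Let I : ℝᵈ → Matrix (Fin d) (Fin d) ℝ be continuous with I(θ) symmetric positive definite for each θ, and let A(θ) = I(θ)^{1/2} B(θ) I(θ)^{1/2} where B(θ) is symmetric positive definite. Then λ_min(A(θ)^{-1/2} I(θ) A(θ)^{-1/2}) = λ_min(B(θ)⁻¹) = 1/λ_max(B(θ)). -/

import Mathlib

open Matrix Filter Asymptotics MeasureTheory
open scoped Topology

noncomputable def minEig {d : ℕ} (M : Matrix (Fin d) (Fin d) ℝ) : ℝ := sInf (spectrum ℝ M)

/-- The square root of a positive semidefinite matrix, as `Matrix.PosSemidef.sqrt` was defined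
in Mathlib of December 2024 (removed since). -/
noncomputable def Matrix.PosSemidef.sqrt {n : Type*} [Fintype n]
    [DecidableEq n] {A : Matrix n n ℝ} (hA : A.PosSemidef) : Matrix n n ℝ :=
  hA.1.eigenvectorUnitary.1 * diagonal (Real.sqrt ∘ hA.1.eigenvalues) *
    (star hA.1.eigenvectorUnitary : Matrix n n ℝ)

open Classical in
noncomputable def sqrtInv {d : ℕ} (A : Matrix (Fin d) (Fin d) ℝ) : Matrix (Fin d) (Fin d) ℝ :=
  if h : A.PosSemidef then h.sqrt⁻¹ else 0

noncomputable def quadForm {d : ℕ} (M : Matrix (Fin d) (Fin d) ℝ) (v : EuclideanSpace ℝ (Fin d)) : ℝ :=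
  (inner ℝ v (Matrix.toEuclideanLin M v) : ℝ)

/-!
Write `S = I^{1/2}` and `Z = A^{1/2}`, so that `Z² = S B S`. In any group, `z² = s b s` gives
`z⁻¹ s² z⁻¹ = (z⁻¹ s) b⁻¹ (z⁻¹ s)⁻¹`; hence `A^{-1/2} I A^{-1/2}` is similar to `B⁻¹` and has the
same spectrum. Since the spectrum of `B` is a finite set of positive reals, the smallest eigenvalue
of `B⁻¹` is the reciprocal of the largest eigenvalue of `B`.
-/

namespace Matrix.PosSemidef

variable {n : Type*} [Fintype n] [DecidableEq n] {A : Matrix n n ℝ}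

theorem posSemidef_sqrt (hA : A.PosSemidef) : hA.sqrt.PosSemidef := by
  rw [PosSemidef.sqrt, star_eq_conjTranspose]
  exact (PosSemidef.diagonal fun i => Real.sqrt_nonneg _).mul_mul_conjTranspose_same _

theorem sqrt_mul_self (hA : A.PosSemidef) : hA.sqrt * hA.sqrt = A := by
  set U := (hA.1.eigenvectorUnitary : Matrix n n ℝ)
  set D := diagonal (Real.sqrt ∘ hA.1.eigenvalues)
  have hUU : star U * U = 1 := Unitary.coe_star_mul_self _
  have hDD : D * D = diagonal (RCLike.ofReal ∘ hA.1.eigenvalues) := by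
    rw [diagonal_mul_diagonal]
    congr 1
    funext i
    simp [Real.mul_self_sqrt (hA.eigenvalues_nonneg i)]
  conv_rhs => rw [hA.1.spectral_theorem, Unitary.conjStarAlgAut_apply, ← hDD]
  calc U * D * star U * (U * D * star U) = U * D * (star U * U) * D * star U := by
        simp only [mul_assoc]
    _ = U * (D * D) * star U := by rw [hUU, mul_one, mul_assoc U D D]

theorem isUnit_sqrt (hA : A.PosSemidef) (hAu : IsUnit A) : IsUnit hA.sqrt :=
  isUnit_of_mul_isUnit_left (hA.sqrt_mul_self ▸ hAu)

end Matrix.PosSemidef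

theorem sqrtInv_eq {d : ℕ} {A : Matrix (Fin d) (Fin d) ℝ} (hA : A.PosSemidef) :
    sqrtInv A = hA.sqrt⁻¹ :=
  dif_pos hA

theorem inv_mul_mul_self_mul_inv_eq_conj {G : Type*} [Group G] {s b z : G}
    (h : z * z = s * b * s) : z⁻¹ * (s * s) * z⁻¹ = z⁻¹ * s * b⁻¹ * (z⁻¹ * s)⁻¹ :=
  calc z⁻¹ * (s * s) * z⁻¹ = z⁻¹ * s * b⁻¹ * s⁻¹ * (s * b * s) * z⁻¹ := by group
    _ = z⁻¹ * s * b⁻¹ * s⁻¹ * (z * z) * z⁻¹ := by rw [h]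
    _ = z⁻¹ * s * b⁻¹ * (z⁻¹ * s)⁻¹ := by group

theorem spectrum_inv_mul_mul_self_mul_inv {R A : Type*} [CommSemiring R] [Ring A] [Algebra R A]
    {s b z : Aˣ} (h : z * z = s * b * s) :
    spectrum R (↑z⁻¹ * (↑s * ↑s) * ↑z⁻¹ : A) = spectrum R (↑b⁻¹ : A) := by
  have hconj : (↑z⁻¹ * (↑s * ↑s) * ↑z⁻¹ : A) = ↑(z⁻¹ * s) * ↑b⁻¹ * ↑(z⁻¹ * s)⁻¹ := by
    simpa only [Units.val_mul] using congrArg Units.val (inv_mul_mul_self_mul_inv_eq_conj h)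
  rw [hconj]
  exact spectrum.units_conjugate

theorem spectrum_sqrtInv_conj_eq_spectrum_inv {d : ℕ} {I B : Matrix (Fin d) (Fin d) ℝ}
    (hI : I.PosDef) (hB : B.PosDef) :
    spectrum ℝ (sqrtInv (hI.posSemidef.sqrt * B * hI.posSemidef.sqrt) * I *
        sqrtInv (hI.posSemidef.sqrt * B * hI.posSemidef.sqrt)) = spectrum ℝ B⁻¹ := by
  set S := hI.posSemidef.sqrt
  have hSS : S * S = I := hI.posSemidef.sqrt_mul_self
  have hSu : IsUnit S := hI.posSemidef.isUnit_sqrt hI.isUnit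
  have hA : (S * B * S).PosSemidef := by
    have hSH : Sᴴ = S := hI.posSemidef.posSemidef_sqrt.isHermitian.eq
    simpa only [hSH] using hB.posSemidef.mul_mul_conjTranspose_same S
  have hZu : IsUnit hA.sqrt := hA.isUnit_sqrt ((hSu.mul hB.isUnit).mul hSu)
  obtain ⟨s, hs⟩ := hSu
  obtain ⟨b, hb⟩ := hB.isUnit
  obtain ⟨z, hz⟩ := hZu
  have hzz : z * z = s * b * s := Units.ext <| by
    simp only [Units.val_mul, hs, hb, hz, hA.sqrt_mul_self]
  rw [sqrtInv_eq hA, ← hSS, ← hz, ← hs, ← hb, ← coe_units_inv, ← coe_units_inv]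
  exact spectrum_inv_mul_mul_self_mul_inv hzz

theorem sInf_inv_eq_inv_sSup_of_finite_of_pos {s : Set ℝ} (hs : s.Finite)
    (hpos : ∀ x ∈ s, 0 < x) : sInf s⁻¹ = (sSup s)⁻¹ := by
  rcases s.eq_empty_or_nonempty with rfl | hne
  · simp
  have hmax : (sSup s)⁻¹ ∈ s⁻¹ := by
    rw [Set.mem_inv, inv_inv]
    exact hne.csSup_mem hs
  refine le_antisymm (csInf_le hs.inv.bddBelow hmax) (le_csInf ⟨_, hmax⟩ fun x hx => ?_)
  rw [Set.mem_inv] at hx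
  simpa using inv_anti₀ (hpos _ hx) (le_csSup hs.bddAbove hx)

theorem minEig_inv_eq_inv_sSup_spectrum {d : ℕ} {B : Matrix (Fin d) (Fin d) ℝ} (hB : B.PosDef) :
    minEig B⁻¹ = (sSup (spectrum ℝ B))⁻¹ := by
  have hspec := hB.isHermitian.spectrum_real_eq_range_eigenvalues
  obtain ⟨b, rfl⟩ := hB.isUnit
  rw [minEig, ← coe_units_inv, ← spectrum.map_inv]
  refine sInf_inv_eq_inv_sSup_of_finite_of_pos (hspec ▸ Set.finite_range _) ?_
  rw [hspec]
  rintro _ ⟨i, rfl⟩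
  exact hB.eigenvalues_pos i

theorem stmt_14_general {n d : ℕ} (I B : (Fin n → ℝ) → Matrix (Fin d) (Fin d) ℝ)
    (hI : ∀ θ, (I θ).PosDef) (hB : ∀ θ, (B θ).PosDef) :
    ∀ θ : Fin n → ℝ,
      minEig (sqrtInv ((hI θ).posSemidef.sqrt * B θ * (hI θ).posSemidef.sqrt) * I θ *
            sqrtInv ((hI θ).posSemidef.sqrt * B θ * (hI θ).posSemidef.sqrt))
          = minEig ((B θ)⁻¹) ∧
        minEig ((B θ)⁻¹) = (sSup (spectrum ℝ (B θ)))⁻¹ := fun θ =>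
  ⟨by rw [minEig, minEig, spectrum_sqrtInv_conj_eq_spectrum_inv (hI θ) (hB θ)],
    minEig_inv_eq_inv_sSup_spectrum (hB θ)⟩

/-- Invariant anisotropic geometry A = I^{1/2} B I^{1/2}:
λ_min(A^{-1/2} I A^{-1/2}) = λ_min(B⁻¹) = 1/λ_max(B). -/
theorem stmt_14 {n d : ℕ} (I B : (Fin n → ℝ) → Matrix (Fin d) (Fin d) ℝ)
    (hIc : Continuous I) (hI : ∀ θ, (I θ).PosDef) (hB : ∀ θ, (B θ).PosDef) :
    ∀ θ : Fin n → ℝ,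
      minEig (sqrtInv ((hI θ).posSemidef.sqrt * B θ * (hI θ).posSemidef.sqrt) * I θ *
            sqrtInv ((hI θ).posSemidef.sqrt * B θ * (hI θ).posSemidef.sqrt))
          = minEig ((B θ)⁻¹) ∧
        minEig ((B θ)⁻¹) = (sSup (spectrum ℝ (B θ)))⁻¹ :=
  stmt_14_general I B hI hB
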